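/- arXiv:2308.13740 — 2 statements merged into one kernel-verified Lean document; each statement's English description precedes it below -/
import Mathlib

section
/- Let Σ be an n×n positive definite matrix with unit diagonal, written as Σ = [[Σ₁, t],[tᵀ, 1]] with Σ₁ of size (n-1)×(n-1), and let T₁ be an (n-1)×(n-1) positive definite diagonal matrix. Let T = diag(T₁, 0) be the n×n matrix with T₁ in the upper-left block and 0 in the (n,n) entry. Then the (n,n) entry of (Σ^{-1} + 2T)^{-1} equals (1 + 2 tᵀ (T₁^{-1} + 2(Σ₁ - t tᵀ))^{-1} t)^{-1}, and in particular this entry is at most 1. -/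
open Matrix

lemma psd_smul' {k : ℕ} {X : Matrix (Fin k) (Fin k) ℝ} (hX : X.PosSemidef) {c : ℝ} (hc : 0 ≤ c) :
    (c • X).PosSemidef := by
  refine PosSemidef.of_dotProduct_mulVec_nonneg ?_ (fun x => ?_)
  · show _ = _
    rw [conjTranspose_smul, hX.1, star_trivial]
  · rw [smul_mulVec, dotProduct_smul, smul_eq_mul]
    exact mul_nonneg hc (hX.dotProduct_mulVec_nonneg x)

theorem last_entry_of_inverse_perturbed
    {n : ℕ} (S : Matrix (Fin (n + 1)) (Fin (n + 1)) ℝ)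
    (hpd : S.PosDef) (hdiag : ∀ i, S i i = 1)
    (d : Fin n → ℝ) (hd : ∀ i, 0 < d i) :
    (S⁻¹ + (2 : ℝ) • Matrix.diagonal (Fin.snoc d 0))⁻¹ (Fin.last n) (Fin.last n) =
        (1 + 2 * ((fun i : Fin n => S i.castSucc (Fin.last n)) ⬝ᵥ
          ((Matrix.diagonal (fun i => (d i)⁻¹) +
              (2 : ℝ) • (S.submatrix Fin.castSucc Fin.castSucc -
                Matrix.vecMulVec (fun i : Fin n => S i.castSucc (Fin.last n))
                  (fun i : Fin n => S i.castSucc (Fin.last n))))⁻¹ *ᵥ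
            fun i : Fin n => S i.castSucc (Fin.last n))))⁻¹ ∧
    (S⁻¹ + (2 : ℝ) • Matrix.diagonal (Fin.snoc d 0))⁻¹ (Fin.last n) (Fin.last n) ≤ 1 := by
  classical
  have hsymm : ∀ i j, S j i = S i j := by
    intro i j
    conv_lhs => rw [← hpd.1]
    simp [conjTranspose_apply]
  set t : Fin n → ℝ := (fun i : Fin n => S i.castSucc (Fin.last n)) with ht
  set S1 : Matrix (Fin n) (Fin n) ℝ := S.submatrix Fin.castSucc Fin.castSucc with hS1
  -- component formulas for S *ᵥ snoc
  have hmc : ∀ (v : Fin n → ℝ) (c : ℝ) (i : Fin n),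
      (S *ᵥ (Fin.snoc v c)) i.castSucc = (S1 *ᵥ v) i + c * t i := by
    intro v c i
    simp [mulVec, dotProduct, Fin.sum_univ_castSucc, hS1, ht, mul_comm]
  have hml : ∀ (v : Fin n → ℝ) (c : ℝ),
      (S *ᵥ (Fin.snoc v c)) (Fin.last n) = t ⬝ᵥ v + c := by
    intro v c
    simp [mulVec, dotProduct, Fin.sum_univ_castSucc, hdiag, ht, hsymm _ (Fin.last n)]
  have hquad : ∀ (v : Fin n → ℝ) (c : ℝ),
      (Fin.snoc v c : Fin (n+1) → ℝ) ⬝ᵥ (S *ᵥ (Fin.snoc v c)) =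
        v ⬝ᵥ (S1 *ᵥ v) + 2*c*(t ⬝ᵥ v) + c*c := by
    intro v c
    rw [show (Fin.snoc v c : Fin (n+1) → ℝ) ⬝ᵥ (S *ᵥ (Fin.snoc v c)) =
      (∑ i : Fin n, v i * (S *ᵥ (Fin.snoc v c)) i.castSucc) +
        c * (S *ᵥ (Fin.snoc v c)) (Fin.last n) from by
        simp [dotProduct, Fin.sum_univ_castSucc]]
    simp only [hmc, hml]
    have h1 : ∑ i : Fin n, v i * ((S1 *ᵥ v) i + c * t i)
        = v ⬝ᵥ (S1 *ᵥ v) + c * (v ⬝ᵥ t) := by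
      simp only [mul_add, Finset.sum_add_distrib, dotProduct, Finset.mul_sum]
      exact congrArg₂ (·+·) rfl (Finset.sum_congr rfl fun i _ => by ring)
    rw [h1, dotProduct_comm v t]
    ring
  -- S1 is positive definite
  have hS1pd : S1.PosDef := by
    refine PosDef.of_dotProduct_mulVec_pos (hpd.1.submatrix _) (fun v hv => ?_)
    have hne : (Fin.snoc v (0:ℝ) : Fin (n+1) → ℝ) ≠ 0 := by
      intro h
      apply hv
      funext i
      have := congrFun h i.castSucc
      simpa using this
    have := hpd.dotProduct_mulVec_pos hne
    rw [star_trivial, hquad] at this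
    rw [star_trivial]
    simpa using this
  -- S1 - t tᵀ is positive semidefinite
  have hvv : ∀ v : Fin n → ℝ, vecMulVec t t *ᵥ v = (t ⬝ᵥ v) • t := by
    intro v
    funext i
    simp only [mulVec, dotProduct, vecMulVec_apply, Pi.smul_apply, smul_eq_mul, Finset.sum_mul]
    exact Finset.sum_congr rfl fun j _ => by ring
  have hsubpsd : (S1 - vecMulVec t t).PosSemidef := by
    refine PosSemidef.of_dotProduct_mulVec_nonneg ((hpd.1.submatrix _).sub ?_) (fun v => ?_)
    · show _ = _
      ext i j
      simp [conjTranspose_apply, vecMulVec_apply, mul_comm]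
    · have := hpd.posSemidef.dotProduct_mulVec_nonneg (Fin.snoc v (-(t ⬝ᵥ v)))
      rw [star_trivial, hquad] at this
      rw [star_trivial, sub_mulVec, dotProduct_sub, hvv, dotProduct_smul, smul_eq_mul,
        dotProduct_comm v t]
      nlinarith [this]
  -- the matrices N, M, A
  set N : Matrix (Fin n) (Fin n) ℝ := Matrix.diagonal (fun i => (d i)⁻¹) + (2:ℝ) • S1 with hN
  set M : Matrix (Fin n) (Fin n) ℝ :=
    Matrix.diagonal (fun i => (d i)⁻¹) + (2:ℝ) • (S1 - vecMulVec t t) with hM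
  have hNpd : N.PosDef :=
    (posDef_diagonal_iff.mpr fun i => inv_pos.2 (hd i)).add_posSemidef
      (psd_smul' hS1pd.posSemidef (by norm_num))
  have hMpd : M.PosDef :=
    (posDef_diagonal_iff.mpr fun i => inv_pos.2 (hd i)).add_posSemidef
      (psd_smul' hsubpsd (by norm_num))
  set A : Matrix (Fin (n+1)) (Fin (n+1)) ℝ :=
      S⁻¹ + (2:ℝ) • Matrix.diagonal (Fin.snoc d 0) with hA
  have hApd : A.PosDef := by
    refine hpd.inv.add_posSemidef (psd_smul' (PosSemidef.diagonal fun i => ?_) (by norm_num))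
    refine Fin.lastCases ?_ (fun j => ?_) i
    · simp
    · simpa using le_of_lt (hd j)
  -- determinant units
  have hSdet : IsUnit S.det := hpd.det_pos.ne'.isUnit
  have hNdet : IsUnit N.det := hNpd.det_pos.ne'.isUnit
  have hMdet : IsUnit M.det := hMpd.det_pos.ne'.isUnit
  have hAdet : IsUnit A.det := hApd.det_pos.ne'.isUnit
  -- w and alpha
  set w : Fin n → ℝ := N⁻¹ *ᵥ t with hwdef
  have hw : N *ᵥ w = t := by
    rw [hwdef, mulVec_mulVec, mul_nonsing_inv _ hNdet, one_mulVec]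
  have hα0 : 0 ≤ t ⬝ᵥ w := by
    have := hNpd.inv.posSemidef.dotProduct_mulVec_nonneg t
    rwa [star_trivial] at this
  -- the vector x
  set y : Fin (n+1) → ℝ := Fin.snoc (fun i => (-2 : ℝ) * w i) 1 with hy
  set x : Fin (n+1) → ℝ := S *ᵥ y with hx
  have hyw : (fun i => (-2:ℝ) * w i) = (-2:ℝ) • w := by funext i; simp
  have hxc : ∀ i : Fin n, x i.castSucc = (d i)⁻¹ * w i := by
    intro i
    have h2 : t i = (d i)⁻¹ * w i + 2 * (S1 *ᵥ w) i := by
      have := congrFun hw i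
      rw [hN] at this
      simpa [add_mulVec, mulVec_diagonal, smul_mulVec, two_mul] using this.symm
    rw [hx, hy, hmc, hyw, mulVec_smul]
    simp only [Pi.smul_apply, smul_eq_mul]
    rw [h2]; ring
  have hxl : x (Fin.last n) = 1 - 2 * (t ⬝ᵥ w) := by
    rw [hx, hy, hml, hyw, dotProduct_smul, smul_eq_mul]
    ring
  -- A *ᵥ x = e_last
  have hAx : A *ᵥ x = Pi.single (Fin.last n) 1 := by
    have h0 : A *ᵥ x = y + (2:ℝ) • (fun i => (Fin.snoc d 0 : Fin (n+1) → ℝ) i * x i) := by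
      rw [hA, add_mulVec]
      congr 1
      · rw [hx, mulVec_mulVec, nonsing_inv_mul _ hSdet, one_mulVec]
      · rw [smul_mulVec]
        congr 1
        funext i
        exact mulVec_diagonal _ _ _
    rw [h0]
    funext i
    refine Fin.lastCases ?_ ?_ i
    · simp [hy]
    · intro j
      have hne : Fin.castSucc j ≠ Fin.last n := Fin.ne_of_lt (Fin.castSucc_lt_last j)
      simp only [Pi.add_apply, Pi.smul_apply, smul_eq_mul, Pi.single_apply, if_neg hne,
        hy, Fin.snoc_castSucc, hxc j]
      have hdj : d j ≠ 0 := (hd j).ne'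
      field_simp
      ring
  -- the diagonal entry
  have hxinv : x = A⁻¹ *ᵥ Pi.single (Fin.last n) 1 := by
    rw [← hAx, mulVec_mulVec, nonsing_inv_mul _ hAdet, one_mulVec]
  have hentry : A⁻¹ (Fin.last n) (Fin.last n) = 1 - 2 * (t ⬝ᵥ w) := by
    rw [← hxl, hxinv, mulVec_single]
    simp
  -- the RHS
  set v : Fin n → ℝ := M⁻¹ *ᵥ t with hvdef
  have hv : M *ᵥ v = t := by
    rw [hvdef, mulVec_mulVec, mul_nonsing_inv _ hMdet, one_mulVec]
  have hNv : N *ᵥ v = (1 + 2 * (t ⬝ᵥ v)) • t := by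
    have h3 : M *ᵥ v = N *ᵥ v - (2:ℝ) • ((t ⬝ᵥ v) • t) := by
      rw [hM, hN]
      rw [show Matrix.diagonal (fun i => (d i)⁻¹) + (2:ℝ) • (S1 - vecMulVec t t)
        = (Matrix.diagonal (fun i => (d i)⁻¹) + (2:ℝ) • S1) - (2:ℝ) • vecMulVec t t from by
          rw [smul_sub]; abel]
      rw [sub_mulVec, smul_mulVec, hvv]
    rw [h3] at hv
    funext i
    have h4 := congrFun hv i
    simp only [Pi.sub_apply, Pi.smul_apply, smul_eq_mul] at h4 ⊢
    linarith [h4]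
  have hvw : v = (1 + 2 * (t ⬝ᵥ v)) • w := by
    have h5 : N⁻¹ *ᵥ (N *ᵥ v) = v := by
      rw [mulVec_mulVec, nonsing_inv_mul _ hNdet, one_mulVec]
    conv_lhs => rw [← h5]
    rw [hNv, mulVec_smul, hwdef]
  have hβα : t ⬝ᵥ v = (1 + 2 * (t ⬝ᵥ v)) * (t ⬝ᵥ w) := by
    conv_lhs => rw [hvw, dotProduct_smul, smul_eq_mul]
  have hprod : (1 + 2 * (t ⬝ᵥ v)) * (1 - 2 * (t ⬝ᵥ w)) = 1 := by
    linear_combination 2 * hβα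
  have hRHS : (1 + 2 * (t ⬝ᵥ (M⁻¹ *ᵥ t)))⁻¹ = 1 - 2 * (t ⬝ᵥ w) := by
    rw [← hvdef]
    exact inv_eq_of_mul_eq_one_right hprod
  constructor
  · rw [hentry, hRHS]
  · rw [hentry]; linarith
end

section
/- Let Σ be an n×n positive definite matrix with unit diagonal, written as Σ = [[1, tᵀ],[t, Σ₁]] with Σ₁ of size (n-1)×(n-1) and t ∈ ℝ^{n-1}, and let s > 0. Let T = diag(s, 0, …, 0) be the n×n diagonal matrix with first entry s and zeros elsewhere. Then the lower-right (n-1)×(n-1) block of (Σ^{-1} + 2T)^{-1} equals Σ₁ - (1 - 1/(1+2s)) t tᵀ. -/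
open Matrix

theorem lower_right_block_of_inverse_perturbed
    {n : ℕ} (S : Matrix (Fin (n + 1)) (Fin (n + 1)) ℝ)
    (hpd : S.PosDef) (hdiag : ∀ i, S i i = 1)
    (s : ℝ) (hs : 0 < s) :
    ∀ i j : Fin n,
      (S⁻¹ + (2 : ℝ) • Matrix.diagonal (Fin.cons s (fun _ : Fin n => 0)))⁻¹ i.succ j.succ =
        S i.succ j.succ - (1 - 1 / (1 + 2 * s)) * (S i.succ 0 * S j.succ 0) := by
  intro i j
  have h1s : (1 + 2 * s) ≠ 0 := by nlinarith
  have hdet : IsUnit S.det := isUnit_iff_ne_zero.mpr (ne_of_gt hpd.det_pos)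
  set E : Matrix (Fin (n+1)) (Fin (n+1)) ℝ := single 0 0 1 with hE
  have hdiagE : Matrix.diagonal (Fin.cons s (fun _ : Fin n => 0)) = s • E := by
    ext a b
    rcases eq_or_ne a b with rfl | hab
    · induction a using Fin.cases <;>
        simp [hE, Matrix.single, Matrix.diagonal_apply,
          (Fin.succ_ne_zero _).symm]
    · simp only [Matrix.diagonal_apply_ne _ hab, hE, Matrix.smul_apply,
        Matrix.single, Matrix.of_apply]
      rcases eq_or_ne a 0 with rfl | ha
      · simp [hab]
      · simp [Ne.symm ha]
  have hESE : E * S * E = E := by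
    ext a b
    rcases eq_or_ne a 0 with rfl | ha
    · rcases eq_or_ne b 0 with rfl | hb
      · rw [hE]
        rw [Matrix.mul_single_apply_same]
        rw [Matrix.single_mul_apply_same]
        simp [hdiag 0]
      · rw [hE, Matrix.mul_single_apply_of_ne _ _ _ _ _ hb,
          Matrix.single_apply_of_ne]
        simp [Ne.symm hb]
    · rw [hE, Matrix.single_apply_of_ne _ _ _ _ _ (by simp [Ne.symm ha])]
      rcases eq_or_ne b 0 with rfl | hb
      · rw [Matrix.mul_single_apply_same,
          Matrix.single_mul_apply_of_ne _ _ _ _ _ ha]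
        simp
      · rw [Matrix.mul_single_apply_of_ne _ _ _ _ _ hb]
  set c : ℝ := 2 * s / (1 + 2 * s) with hc
  set N : Matrix (Fin (n+1)) (Fin (n+1)) ℝ := S - c • (S * E * S) with hN
  have hinvS : S⁻¹ * S = 1 := Matrix.nonsing_inv_mul S hdet
  have hMN : (S⁻¹ + (2 : ℝ) • Matrix.diagonal (Fin.cons s (fun _ : Fin n => 0))) * N = 1 := by
    rw [hdiagE, smul_smul, hN]
    have expand : (S⁻¹ + (2 * s) • E) * (S - c • (S * E * S)) =
        S⁻¹ * S - c • (S⁻¹ * S * E * S) + (2*s) • (E * S) - (c*(2*s)) • ((E * S * E) * S) := by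
      simp only [Matrix.add_mul, Matrix.mul_sub, Matrix.smul_mul, Matrix.mul_smul, smul_smul, smul_add, smul_sub]
      simp only [Matrix.mul_assoc]
      abel
    rw [expand, hinvS, hESE, Matrix.one_mul]
    have : (c*(2*s) : ℝ) = 2*s - c := by
      rw [hc]; field_simp
      ring
    rw [this]
    simp only [sub_smul]
    abel
  have hinv : (S⁻¹ + (2 : ℝ) • Matrix.diagonal (Fin.cons s (fun _ : Fin n => 0)))⁻¹ = N :=
    Matrix.inv_eq_right_inv hMN
  rw [hinv, hN]
  have hSES : (S * E * S) i.succ j.succ = S i.succ 0 * S 0 j.succ := by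
    rw [Matrix.mul_assoc, Matrix.mul_apply]
    rw [Finset.sum_eq_single (0 : Fin (n+1))]
    · rw [hE, Matrix.single_mul_apply_same]; ring
    · intro k _ hk
      rw [hE, Matrix.single_mul_apply_of_ne _ _ _ _ _ hk, mul_zero]
    · intro h; exact absurd (Finset.mem_univ _) h
  have hsym : S 0 j.succ = S j.succ 0 := by
    have := congrFun (congrFun hpd.isHermitian 0) j.succ
    simpa [Matrix.conjTranspose_apply] using this.symm
  have hc' : c = 1 - 1 / (1 + 2 * s) := by
    rw [hc]; field_simp; ring
  simp only [Matrix.sub_apply, Matrix.smul_apply, smul_eq_mul, hSES, hsym, hc']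
end
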